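/- Let G be a Gibonacci sequence and let p ≥ 2 and m ≥ p + 1 be natural numbers. Then Σ_{k=2p}^{m} ( G_1 · C(k−p−2, p−1) + G_0 · C(k−p−2, p−2) ) · G_{m−k} + Σ_{t=0}^{p−1} ( G_1^2 · C(m−t−2, t) + 2 · G_0 · G_1 · C(m−t−2, t−1) + G_0^2 · C(m−t−2, t−2) ) = G_1 · G_{m−1} + G_0 · G_{m−2}. -/

import Mathlib

/-!
Write `B_t(m)` for the `t`-th summand of the second sum (`diagonalTerm`). Pascal's rule gives
`B_{t+1}(m + 2) = B_{t+1}(m + 1) + B_t(m)`, so the partial sums `∑_{t < p} B_t(m)` satisfy the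
Fibonacci recurrence in `m` up to the defect `-B_{p-1}(m)`, and the full diagonal sum satisfies it
exactly; the latter therefore equals `G₁ G_{m-1} + G₀ G_{m-2}`. Convolving coefficients `a_k` with
a Gibonacci sequence gives the Fibonacci recurrence up to the boundary term
`a_{m+1} (G₁ - G₀) + a_{m+2} G₀`, which by Pascal's rule again is exactly `B_{p-1}(m)`. So both
sides obey the same recurrence from `m = p + 1` on, and the two initial values reduce to the full
diagonal sum.
-/
/-- Binomial coefficient `C a b` with an integer lower index, with the
convention that it vanishes for negative lower index. -/
def C (a : ℕ) (b : ℤ) : ℤ := if 0 ≤ b then (a.choose b.toNat : ℤ) else 0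

open Finset

theorem C_natCast (a t : ℕ) : C a t = a.choose t := by
  simp [C]

theorem C_eq_zero_of_neg (a : ℕ) {b : ℤ} (hb : b < 0) : C a b = 0 := by
  simp [C, hb.not_ge]

theorem C_eq_zero_of_lt (a : ℕ) {b : ℤ} (h : (a : ℤ) < b) : C a b = 0 := by
  lift b to ℕ using by omega
  rw [C_natCast, Nat.choose_eq_zero_of_lt (by exact_mod_cast h), Nat.cast_zero]

theorem C_succ (a : ℕ) (b : ℤ) : C (a + 1) b = C a b + C a (b - 1) := by
  rcases lt_trichotomy b 0 with hb | rfl | hb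
  · simp [C_eq_zero_of_neg _ hb, C_eq_zero_of_neg _ (show b - 1 < 0 by omega)]
  · simp [C]
  · obtain ⟨c, rfl⟩ : ∃ c : ℕ, b = c + 1 := ⟨b.toNat - 1, by omega⟩
    rw [add_sub_cancel_right, ← Nat.cast_succ, C_natCast, C_natCast, C_natCast,
      Nat.choose_succ_succ, Nat.cast_add, add_comm]

theorem eq_of_fib_rec {α : Type*} [Add α] (u v : ℕ → α) {m₀ : ℕ}
    (hu : ∀ m ≥ m₀, u (m + 2) = u (m + 1) + u m) (hv : ∀ m ≥ m₀, v (m + 2) = v (m + 1) + v m)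
    (h₀ : u m₀ = v m₀) (h₁ : u (m₀ + 1) = v (m₀ + 1)) : ∀ m ≥ m₀, u m = v m := by
  suffices h : ∀ n, u (m₀ + n) = v (m₀ + n) ∧ u (m₀ + n + 1) = v (m₀ + n + 1) by
    intro m hm
    obtain ⟨n, rfl⟩ := Nat.exists_eq_add_of_le hm
    exact (h n).1
  intro n
  induction n with
  | zero => exact ⟨h₀, h₁⟩
  | succ n ih =>
    refine ⟨ih.2, ?_⟩
    rw [show m₀ + (n + 1) + 1 = m₀ + n + 2 by omega, hu _ (by omega), hv _ (by omega), ih.1, ih.2]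

section Gibonacci

variable {R : Type*} [CommRing R] {G : ℕ → R} (hG : ∀ n, G (n + 2) = G (n + 1) + G n)
include hG

theorem gibonacci_comb_add_two (x y : R) {m : ℕ} (hm : 2 ≤ m) :
    x * G (m + 2 - 1) + y * G (m + 2 - 2) =
      (x * G (m + 1 - 1) + y * G (m + 1 - 2)) + (x * G (m - 1) + y * G (m - 2)) := by
  obtain ⟨n, rfl⟩ := Nat.exists_eq_add_of_le' hm
  simp only [show n + 2 + 2 - 1 = n + 3 by omega, show n + 2 + 2 - 2 = n + 2 by omega,
    show n + 2 + 1 - 1 = n + 2 by omega, show n + 2 + 1 - 2 = n + 1 by omega,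
    show n + 2 - 1 = n + 1 by omega, show n + 2 - 2 = n by omega, hG]
  ring

theorem sum_range_mul_gibonacci_add_two (a : ℕ → R) (m : ℕ) :
    ∑ i ∈ range (m + 3), a i * G (m + 2 - i) =
      ∑ i ∈ range (m + 2), a i * G (m + 1 - i) + ∑ i ∈ range (m + 1), a i * G (m - i) +
        (a (m + 1) * (G 1 - G 0) + a (m + 2) * G 0) := by
  have split : ∑ i ∈ range (m + 1), a i * G (m + 2 - i) =
      ∑ i ∈ range (m + 1), a i * G (m + 1 - i) + ∑ i ∈ range (m + 1), a i * G (m - i) := by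
    rw [← sum_add_distrib]
    refine sum_congr rfl fun i hi => ?_
    have hi : i ≤ m := Nat.lt_succ_iff.mp (mem_range.mp hi)
    rw [show m + 2 - i = m - i + 2 by omega, show m + 1 - i = m - i + 1 by omega, hG, mul_add]
  rw [sum_range_succ, sum_range_succ, sum_range_succ (n := m + 1), split,
    show m + 2 - (m + 1) = 1 by omega, Nat.sub_self, Nat.sub_self]
  ring

end Gibonacci

section Diagonal

variable (g₀ g₁ : ℤ)

/-- The coefficient of `x ^ t` in `(g₁ + g₀ x) ^ 2 (1 + x) ^ (m - t - 2)`. -/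
def diagonalTerm (m t : ℕ) : ℤ :=
  g₁ ^ 2 * C (m - t - 2) (t : ℤ) + 2 * g₀ * g₁ * C (m - t - 2) ((t : ℤ) - 1) +
    g₀ ^ 2 * C (m - t - 2) ((t : ℤ) - 2)

def tailCoeff (p k : ℕ) : ℤ :=
  if 2 * p ≤ k then g₁ * C (k - p - 2) ((p : ℤ) - 1) + g₀ * C (k - p - 2) ((p : ℤ) - 2) else 0

theorem diagonalTerm_zero (m : ℕ) : diagonalTerm g₀ g₁ m 0 = g₁ ^ 2 := by
  simp [diagonalTerm, C]

theorem diagonalTerm_add_two {m t : ℕ} (h : t + 2 ≤ m) :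
    diagonalTerm g₀ g₁ (m + 2) (t + 1) =
      diagonalTerm g₀ g₁ (m + 1) (t + 1) + diagonalTerm g₀ g₁ m t := by
  simp only [diagonalTerm, show m + 2 - (t + 1) - 2 = m - t - 2 + 1 by omega,
    show m + 1 - (t + 1) - 2 = m - t - 2 by omega, C_succ]
  push_cast
  ring_nf

theorem sum_diagonalTerm_add_two {m N : ℕ} (h : N < m) :
    ∑ t ∈ range (N + 1), diagonalTerm g₀ g₁ (m + 2) t =
      ∑ t ∈ range (N + 1), diagonalTerm g₀ g₁ (m + 1) t +
        ∑ t ∈ range N, diagonalTerm g₀ g₁ m t := by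
  rw [sum_range_succ', sum_range_succ', diagonalTerm_zero, diagonalTerm_zero,
    sum_congr rfl fun t ht => diagonalTerm_add_two g₀ g₁ (by rw [mem_range] at ht; omega),
    sum_add_distrib]
  ring

theorem tailCoeff_of_lt {p k : ℕ} (h : k < 2 * p) : tailCoeff g₀ g₁ p k = 0 :=
  if_neg h.not_ge

theorem tailCoeff_of_le {p k : ℕ} (h : p + 2 ≤ k) :
    tailCoeff g₀ g₁ p k =
      g₁ * C (k - p - 2) ((p : ℤ) - 1) + g₀ * C (k - p - 2) ((p : ℤ) - 2) := by
  unfold tailCoeff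
  split_ifs with hk
  · rfl
  · rw [C_eq_zero_of_lt _ (by omega), C_eq_zero_of_lt _ (by omega)]
    ring

theorem tailCoeff_boundary {q m : ℕ} (h : q + 2 ≤ m) :
    tailCoeff g₀ g₁ (q + 1) (m + 1) * (g₁ - g₀) + tailCoeff g₀ g₁ (q + 1) (m + 2) * g₀ =
      diagonalTerm g₀ g₁ m q := by
  rw [tailCoeff_of_le _ _ (by omega), tailCoeff_of_le _ _ (by omega), diagonalTerm,
    show m + 2 - (q + 1) - 2 = m - q - 2 + 1 by omega,
    show m + 1 - (q + 1) - 2 = m - q - 2 by omega, C_succ, C_succ]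
  push_cast
  ring_nf

theorem tailCoeff_mul_eq_diagonalTerm {p : ℕ} (hp : 2 ≤ p) :
    tailCoeff g₀ g₁ p (p + 2) * g₀ = diagonalTerm g₀ g₁ (p + 2) p := by
  rw [tailCoeff_of_le _ _ le_rfl, diagonalTerm, show p + 2 - p - 2 = 0 by omega,
    C_eq_zero_of_lt 0 (show (0 : ℤ) < p by omega),
    C_eq_zero_of_lt 0 (show (0 : ℤ) < p - 1 by omega)]
  ring

end Diagonal

section Horizontal

variable {G : ℕ → ℤ} (hG : ∀ n, G (n + 2) = G (n + 1) + G n)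
include hG

theorem sum_diagonalTerm_eq {m : ℕ} (hm : 3 ≤ m) :
    ∑ t ∈ range (m - 1), diagonalTerm (G 0) (G 1) m t = G 1 * G (m - 1) + G 0 * G (m - 2) := by
  refine eq_of_fib_rec (fun m ↦ ∑ t ∈ range (m - 1), diagonalTerm (G 0) (G 1) m t)
    (fun m ↦ G 1 * G (m - 1) + G 0 * G (m - 2)) (m₀ := 3) (fun m hm => ?_)
    (fun m hm => gibonacci_comb_add_two hG _ _ (by omega)) ?_ ?_ m hm
  · obtain ⟨n, rfl⟩ := Nat.exists_eq_add_of_le' (show 1 ≤ m by omega)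
    have hlast : diagonalTerm (G 0) (G 1) (n + 1 + 2) (n + 1) = 0 := by
      simp only [diagonalTerm, show n + 1 + 2 - (n + 1) - 2 = 0 by omega]
      rw [C_eq_zero_of_lt, C_eq_zero_of_lt, C_eq_zero_of_lt] <;> push_cast <;> omega
    rw [show n + 1 + 2 - 1 = n + 1 + 1 by omega, sum_range_succ, hlast, add_zero,
      sum_diagonalTerm_add_two _ _ (by omega)]
    rfl
  · norm_num [sum_range_succ, diagonalTerm, C]
    linear_combination (-G 1) * hG 0
  · norm_num [sum_range_succ, diagonalTerm, C]
    linear_combination (-G 1) * hG 1 - (G 1 + G 0) * hG 0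

theorem horizontal_sum_eq {p : ℕ} (hp : 2 ≤ p) {m : ℕ} (hm : p + 1 ≤ m) :
    ∑ k ∈ range (m + 1), tailCoeff (G 0) (G 1) p k * G (m - k) +
        ∑ t ∈ range p, diagonalTerm (G 0) (G 1) m t =
      G 1 * G (m - 1) + G 0 * G (m - 2) := by
  obtain ⟨q, rfl⟩ := Nat.exists_eq_add_of_le' (show 1 ≤ p by omega)
  refine eq_of_fib_rec
    (fun m ↦ ∑ k ∈ range (m + 1), tailCoeff (G 0) (G 1) (q + 1) k * G (m - k) +
      ∑ t ∈ range (q + 1), diagonalTerm (G 0) (G 1) m t)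
    (fun m ↦ G 1 * G (m - 1) + G 0 * G (m - 2)) (m₀ := q + 2) (fun m hm => ?_)
    (fun m hm => gibonacci_comb_add_two hG _ _ (by omega)) ?_ ?_ m hm
  · rw [sum_range_mul_gibonacci_add_two hG, sum_diagonalTerm_add_two _ _ (by omega),
      sum_range_succ (n := q) (fun t ↦ diagonalTerm (G 0) (G 1) m t),
      ← tailCoeff_boundary _ _ (by omega)]
    ring
  · rw [sum_eq_zero fun k hk => by
      rw [tailCoeff_of_lt _ _ (by rw [mem_range] at hk; omega), zero_mul], zero_add,
      ← sum_diagonalTerm_eq hG (by omega)]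
    rfl
  · rw [sum_range_succ, sum_eq_zero fun k hk => by
      rw [tailCoeff_of_lt _ _ (by rw [mem_range] at hk; omega), zero_mul],
      zero_add, ← sum_diagonalTerm_eq hG (by omega), show q + 1 + 2 - 1 = q + 1 + 1 by omega,
      sum_range_succ _ (q + 1), show q + 2 + 1 - (q + 3) = 0 by omega, add_comm]
    exact congrArg _ (tailCoeff_mul_eq_diagonalTerm _ _ hp)

end Horizontal

theorem gibonacci_pth_horizontal (G : ℕ → ℤ)
    (hG : ∀ n, G (n + 2) = G (n + 1) + G n)
    (p m : ℕ) (hp : 2 ≤ p) (hm : p + 1 ≤ m) :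
    (∑ k ∈ Finset.Icc (2 * p) m,
        (G 1 * C (k - p - 2) ((p : ℤ) - 1) + G 0 * C (k - p - 2) ((p : ℤ) - 2)) *
          G (m - k)) +
      (∑ t ∈ Finset.range p,
        (G 1 ^ 2 * C (m - t - 2) (t : ℤ) + 2 * G 0 * G 1 * C (m - t - 2) ((t : ℤ) - 1) +
          G 0 ^ 2 * C (m - t - 2) ((t : ℤ) - 2))) =
    G 1 * G (m - 1) + G 0 * G (m - 2) := by
  have Icc_eq : Icc (2 * p) m = (range (m + 1)).filter (2 * p ≤ ·) := by
    ext k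
    simp only [mem_Icc, mem_filter, mem_range]
    omega
  rw [Icc_eq, sum_filter]
  simpa only [tailCoeff, diagonalTerm, ite_mul, zero_mul] using horizontal_sum_eq hG hp hm
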